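/- Let X₁ be the perturbed curve space obtained from the oscillation ε₁(t) = e^{−1/t²} sin(π e^{1/t − 1/π}) (with ε₁(0) = 0). Then X₁ does not satisfy the layer decay property (LD); indeed, there is a constant c > 0 such that for the unit ball B⁰ = {x ∈ X₁ : |x| < 1} and all sufficiently small ε > 0 one has Λ(B⁰_ε) ≥ c / (−ln ε), which is incompatible with any bound of the form C ε^η. -/

import Mathlib

open MeasureTheory Metric Set
open scoped ENNReal NNReal Real

/-- The perturbed curve `γ` associated with an oscillation `e : [0,π] → ℝ`:
`γ(t) = (t+1, 0)` for `t ≤ 0`, `γ(t) = (1+e(t))(cos t, sin t)` for `0 < t < π`,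
`γ(t) = (π−t, 0)` for `t ≥ π`. -/
noncomputable def pertCurve (e : ℝ → ℝ) (t : ℝ) : ℂ :=
  if t ≤ 0 then ((t + 1 : ℝ) : ℂ)
  else if t < π then ((1 + e t : ℝ) : ℂ) * Complex.exp (Complex.I * (t : ℂ))
  else ((π - t : ℝ) : ℂ)

/-- The perturbed curve space `X_e = {γ(t) : t ≥ −1}`. -/
noncomputable def pertSet (e : ℝ → ℝ) : Set ℂ := pertCurve e '' Set.Ici (-1)

/-- The union `B_ε` of the inner and outer layers of width `ε` of the "ball"
`S ∩ B` of the subspace `S`, complements being taken in `S`. -/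
def relLayer (S B : Set ℂ) (ε : ℝ) : Set ℂ :=
  {x ∈ S ∩ B | Metric.infDist x (S \ B) ≤ ε} ∪
  {y ∈ S \ B | Metric.infDist y (S ∩ B) ≤ ε}

/-- The exponential oscillation `ε₁(t) = e^{−1/t²} sin(π e^{1/t − 1/π})`, `ε₁(0) = 0`. -/
noncomputable def eps1 (t : ℝ) : ℝ :=
  if t = 0 then 0 else Real.exp (-1 / t ^ 2) * Real.sin (π * Real.exp (1 / t - 1 / π))

noncomputable def eps1' (t : ℝ) : ℝ :=
  Real.exp (-1 / t ^ 2) * (2 / t ^ 3) * Real.sin (π * Real.exp (1 / t - 1 / π)) +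
  Real.exp (-1 / t ^ 2) *
    (Real.cos (π * Real.exp (1 / t - 1 / π)) * (π * Real.exp (1 / t - 1 / π) * (-1 / t ^ 2)))

lemma eps1_hasDerivAt {t : ℝ} (ht : t ≠ 0) : HasDerivAt eps1 (eps1' t) t := by
  have hev : eps1 =ᶠ[nhds t] fun s =>
      Real.exp (-1 / s ^ 2) * Real.sin (π * Real.exp (1 / s - 1 / π)) := by
    filter_upwards [eventually_ne_nhds ht] with s hs
    simp [eps1, hs]
  have ht2 : (t : ℝ) ^ 2 ≠ 0 := pow_ne_zero _ ht
  have h1 : HasDerivAt (fun s : ℝ => -1 / s ^ 2) (2 / t ^ 3) t := by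
    have := (hasDerivAt_const t (-1 : ℝ)).div (hasDerivAt_pow 2 t) ht2
    refine this.congr_deriv ?_
    field_simp
    ring
  have h2 : HasDerivAt (fun s : ℝ => 1 / s - 1 / π) (-1 / t ^ 2) t := by
    have := ((hasDerivAt_const t (1 : ℝ)).div (hasDerivAt_id t) ht).sub_const (1 / π)
    refine this.congr_deriv ?_
    simp only [id]
    field_simp
    ring
  have h3 : HasDerivAt (fun s : ℝ => Real.exp (-1 / s ^ 2))
      (Real.exp (-1 / t ^ 2) * (2 / t ^ 3)) t := h1.exp
  have h4 : HasDerivAt (fun s : ℝ => Real.sin (π * Real.exp (1 / s - 1 / π)))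
      (Real.cos (π * Real.exp (1 / t - 1 / π)) * (π * Real.exp (1 / t - 1 / π) * (-1 / t ^ 2))) t := by
    have h5 : HasDerivAt (fun s : ℝ => π * Real.exp (1 / s - 1 / π))
        (π * (Real.exp (1 / t - 1 / π) * (-1 / t ^ 2))) t := (h2.exp).const_mul π
    have := h5.sin
    convert this using 1
    ring
  exact (h3.mul h4).congr_of_eventuallyEq hev


lemma cube_le_exp {y : ℝ} (hy : 0 ≤ y) : y ^ 3 ≤ 27 * Real.exp y := by
  have h1 : y / 3 ≤ Real.exp (y / 3) := by nlinarith [Real.add_one_le_exp (y / 3)]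
  have h2 : (y / 3) ^ 3 ≤ Real.exp (y / 3) ^ 3 :=
    pow_le_pow_left₀ (by positivity) h1 3
  have h3 : Real.exp (y / 3) ^ 3 = Real.exp y := by
    rw [← Real.exp_nat_mul]; congr 1; push_cast; ring
  nlinarith [h2, h3]

lemma sq_le_exp {y : ℝ} (hy : 0 ≤ y) : y ^ 2 ≤ 4 * Real.exp y := by
  have h1 : y / 2 ≤ Real.exp (y / 2) := by nlinarith [Real.add_one_le_exp (y / 2)]
  have h2 : (y / 2) ^ 2 ≤ Real.exp (y / 2) ^ 2 :=
    pow_le_pow_left₀ (by positivity) h1 2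
  have h3 : Real.exp (y / 2) ^ 2 = Real.exp y := by
    rw [← Real.exp_nat_mul]; congr 1; push_cast; ring
  nlinarith [h2, h3]

lemma mul_cancel_aux {P Q c d : ℝ} (hP : 0 ≤ P) (h : P * Q ≤ c) (h1 : 1 ≤ d * Q)
    (hd : 0 ≤ d) : P ≤ c * d := by
  calc P = P * 1 := by ring
    _ ≤ P * (d * Q) := mul_le_mul_of_nonneg_left h1 hP
    _ = (P * Q) * d := by ring
    _ ≤ c * d := mul_le_mul_of_nonneg_right h hd

set_option maxHeartbeats 1000000 in
lemma eps1'_bound {t : ℝ} (h0 : 0 < t) (hπ : t ≤ π) : |eps1' t| ≤ 2600 := by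
  have hπ0 := Real.pi_pos
  set x : ℝ := 1 / t with hxdef
  have hx0 : 0 < x := by positivity
  have hx : 1 / π ≤ x := by
    rw [hxdef]; exact one_div_le_one_div_of_le h0 hπ
  have hπx : 1 ≤ π * x := by
    have h := mul_le_mul_of_nonneg_left hx hπ0.le
    have h2 : π * (1 / π) = 1 := by field_simp
    linarith [h, h2.ge]
  have e2 : -1 / t ^ 2 = -x ^ 2 := by rw [hxdef]; field_simp
  have e3 : 2 / t ^ 3 = 2 * x ^ 3 := by rw [hxdef]; field_simp
  have e4 : 1 / t - 1 / π = x - 1 / π := by rw [hxdef]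
  rw [eps1', e2, e3, e4]
  have hE := Real.exp_pos (-x ^ 2)
  have hEe := Real.exp_pos (x - 1 / π)
  have hπlt : π < 3.1416 := by linarith [Real.pi_lt_d6]
  have hπ3 : 1 ≤ π ^ 3 * x ^ 3 := by
    have h := one_le_pow₀ hπx (n := 3)
    calc (1:ℝ) ≤ (π * x) ^ 3 := h
      _ = π ^ 3 * x ^ 3 := by ring
  have hπ2 : 1 ≤ π ^ 2 * x ^ 2 := by
    have h := one_le_pow₀ hπx (n := 2)
    calc (1:ℝ) ≤ (π * x) ^ 2 := h
      _ = π ^ 2 * x ^ 2 := by ring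
  have hπsq : π ^ 2 ≤ 9.87 := by nlinarith [hπlt, hπ0]
  have hπcube : π ^ 3 ≤ 31.1 := by nlinarith [hπlt, hπ0, hπsq]
  -- first term
  have hA : Real.exp (-x ^ 2) * x ^ 6 ≤ 27 := by
    have h1 : (x ^ 2) ^ 3 ≤ 27 * Real.exp (x ^ 2) := cube_le_exp (by positivity)
    have h2 : Real.exp (-x ^ 2) * Real.exp (x ^ 2) = 1 := by
      rw [← Real.exp_add]; simp
    nlinarith [h1, h2, hE.le]
  have hA' : Real.exp (-x ^ 2) * x ^ 3 ≤ 27 * π ^ 3 := by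
    apply mul_cancel_aux (by positivity) _ hπ3 (by positivity)
    calc (Real.exp (-x ^ 2) * x ^ 3) * x ^ 3 = Real.exp (-x ^ 2) * x ^ 6 := by ring
      _ ≤ 27 := hA
  -- second term
  have h1 : Real.exp (-x ^ 2) * Real.exp (x - 1 / π) ≤
      Real.exp (1 / 2) * Real.exp (-x ^ 2 / 2) := by
    rw [← Real.exp_add, ← Real.exp_add]
    apply Real.exp_le_exp.2
    nlinarith [sq_nonneg (x - 1), one_div_pos.2 hπ0]
  have h2 : Real.exp (-x ^ 2 / 2) * x ^ 4 ≤ 16 := by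
    have h3 : (x ^ 2 / 2) ^ 2 ≤ 4 * Real.exp (x ^ 2 / 2) := sq_le_exp (by positivity)
    have h4 : Real.exp (-x ^ 2 / 2) * Real.exp (x ^ 2 / 2) = 1 := by
      rw [← Real.exp_add]; ring_nf; exact Real.exp_zero
    nlinarith [h3, h4, (Real.exp_pos (-x ^ 2 / 2)).le]
  have hB : Real.exp (-x ^ 2) * Real.exp (x - 1 / π) * x ^ 4 ≤ 16 * Real.exp (1 / 2) := by
    calc Real.exp (-x ^ 2) * Real.exp (x - 1 / π) * x ^ 4
        ≤ Real.exp (1 / 2) * Real.exp (-x ^ 2 / 2) * x ^ 4 :=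
          mul_le_mul_of_nonneg_right h1 (by positivity)
      _ = Real.exp (1 / 2) * (Real.exp (-x ^ 2 / 2) * x ^ 4) := by ring
      _ ≤ Real.exp (1 / 2) * 16 :=
          mul_le_mul_of_nonneg_left h2 (Real.exp_pos _).le
      _ = 16 * Real.exp (1 / 2) := by ring
  have hB' : Real.exp (-x ^ 2) * Real.exp (x - 1 / π) * x ^ 2 ≤
      16 * Real.exp (1 / 2) * π ^ 2 := by
    apply mul_cancel_aux (by positivity) _ hπ2 (by positivity)
    calc (Real.exp (-x ^ 2) * Real.exp (x - 1 / π) * x ^ 2) * x ^ 2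
        = Real.exp (-x ^ 2) * Real.exp (x - 1 / π) * x ^ 4 := by ring
      _ ≤ 16 * Real.exp (1 / 2) := hB
  have hehalf : Real.exp (1 / 2) ≤ 1.65 := by
    have hsq : Real.exp (1 / 2) * Real.exp (1 / 2) = Real.exp 1 := by
      rw [← Real.exp_add]; norm_num
    nlinarith [Real.exp_one_lt_d9, Real.exp_pos (1 / 2), hsq]
  -- assemble
  have hs : |Real.sin (π * Real.exp (x - 1 / π))| ≤ 1 := Real.abs_sin_le_one _
  have hc : |Real.cos (π * Real.exp (x - 1 / π))| ≤ 1 := Real.abs_cos_le_one _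
  have hT1 : |Real.exp (-x ^ 2) * (2 * x ^ 3) * Real.sin (π * Real.exp (x - 1 / π))| ≤ 1700 := by
    rw [abs_mul, abs_of_pos (by positivity : (0:ℝ) < Real.exp (-x ^ 2) * (2 * x ^ 3))]
    have hb : Real.exp (-x ^ 2) * (2 * x ^ 3) ≤ 1700 := by nlinarith [hA', hπcube]
    nlinarith [hb, hs, abs_nonneg (Real.sin (π * Real.exp (x - 1 / π))),
      (by positivity : (0:ℝ) < Real.exp (-x ^ 2) * (2 * x ^ 3))]
  have hT2 : |Real.exp (-x ^ 2) * (Real.cos (π * Real.exp (x - 1 / π)) *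
      (π * Real.exp (x - 1 / π) * (-x ^ 2)))| ≤ 900 := by
    rw [abs_mul, abs_mul, abs_of_pos hE]
    have e7 : |π * Real.exp (x - 1 / π) * (-x ^ 2)| = π * Real.exp (x - 1 / π) * x ^ 2 := by
      rw [abs_of_nonpos (by nlinarith)]; ring
    rw [e7]
    have hb : Real.exp (-x ^ 2) * (π * Real.exp (x - 1 / π) * x ^ 2) ≤ 900 := by
      have : Real.exp (-x ^ 2) * (π * Real.exp (x - 1 / π) * x ^ 2) =
          π * (Real.exp (-x ^ 2) * Real.exp (x - 1 / π) * x ^ 2) := by ring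
      rw [this]
      calc π * (Real.exp (-x ^ 2) * Real.exp (x - 1 / π) * x ^ 2)
          ≤ π * (16 * Real.exp (1 / 2) * π ^ 2) :=
            mul_le_mul_of_nonneg_left hB' hπ0.le
        _ ≤ 900 := by nlinarith [hehalf, hπsq, hπlt, hπ0, Real.exp_pos (1/2)]
    calc Real.exp (-x ^ 2) * (|Real.cos (π * Real.exp (x - 1 / π))| *
          (π * Real.exp (x - 1 / π) * x ^ 2))
        ≤ Real.exp (-x ^ 2) * (1 * (π * Real.exp (x - 1 / π) * x ^ 2)) := by
          apply mul_le_mul_of_nonneg_left _ hE.le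
          apply mul_le_mul_of_nonneg_right hc (by positivity)
      _ = Real.exp (-x ^ 2) * (π * Real.exp (x - 1 / π) * x ^ 2) := by ring
      _ ≤ 900 := hb
  calc |Real.exp (-x ^ 2) * (2 * x ^ 3) * Real.sin (π * Real.exp (x - 1 / π)) +
        Real.exp (-x ^ 2) * (Real.cos (π * Real.exp (x - 1 / π)) *
          (π * Real.exp (x - 1 / π) * (-x ^ 2)))| ≤
      |Real.exp (-x ^ 2) * (2 * x ^ 3) * Real.sin (π * Real.exp (x - 1 / π))| +
      |Real.exp (-x ^ 2) * (Real.cos (π * Real.exp (x - 1 / π)) *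
          (π * Real.exp (x - 1 / π) * (-x ^ 2)))| := abs_add_le _ _
    _ ≤ 2600 := by linarith [hT1, hT2]

lemma eps1_abs_le {t : ℝ} (ht : t ≠ 0) : |eps1 t| ≤ Real.exp (-1 / t ^ 2) := by
  rw [eps1, if_neg ht, abs_mul, abs_of_pos (Real.exp_pos _)]
  calc Real.exp (-1 / t ^ 2) * |Real.sin (π * Real.exp (1 / t - 1 / π))|
      ≤ Real.exp (-1 / t ^ 2) * 1 :=
        mul_le_mul_of_nonneg_left (Real.abs_sin_le_one _) (Real.exp_pos _).le
    _ = Real.exp (-1 / t ^ 2) := by ring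

lemma eps1_abs_le_one (t : ℝ) : |eps1 t| ≤ 1 := by
  rcases eq_or_ne t 0 with h | h
  · simp [eps1, h]
  · refine (eps1_abs_le h).trans ?_
    rw [Real.exp_le_one_iff]
    have : 0 < t ^ 2 := by positivity
    rw [div_nonpos_iff]
    right; constructor <;> linarith

/-- the middle branch of the curve -/
noncomputable def gmid (t : ℝ) : ℂ :=
  ((1 + eps1 t : ℝ) : ℂ) * Complex.exp (Complex.I * (t : ℂ))

lemma gmid_hasDerivAt {t : ℝ} (ht : t ≠ 0) :
    HasDerivAt gmid
      (((eps1' t : ℝ) : ℂ) * Complex.exp (Complex.I * t) +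
        ((1 + eps1 t : ℝ) : ℂ) * (Complex.exp (Complex.I * t) * Complex.I)) t := by
  have h1 : HasDerivAt (fun s : ℝ => ((1 + eps1 s : ℝ) : ℂ)) ((eps1' t : ℝ) : ℂ) t := by
    have := ((eps1_hasDerivAt ht).const_add 1).ofReal_comp
    exact this
  have h2 : HasDerivAt (fun s : ℝ => Complex.exp (Complex.I * (s : ℂ)))
      (Complex.exp (Complex.I * t) * Complex.I) t := by
    have hid : HasDerivAt (fun s : ℝ => (s : ℂ)) 1 t := by
      simpa using (hasDerivAt_id t).ofReal_comp
    have hmul : HasDerivAt (fun s : ℝ => Complex.I * (s : ℂ)) Complex.I t := by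
      simpa using hid.const_mul Complex.I
    simpa using hmul.cexp
  exact h1.mul h2

lemma gmid_lipschitz : LipschitzOnWith 2602 gmid (Set.Ioo 0 π) := by
  apply (convex_Ioo (0:ℝ) π).lipschitzOnWith_of_nnnorm_hasDerivWithin_le
    (f' := fun t => ((eps1' t : ℝ) : ℂ) * Complex.exp (Complex.I * t) +
        ((1 + eps1 t : ℝ) : ℂ) * (Complex.exp (Complex.I * t) * Complex.I))
    (fun x hx => (gmid_hasDerivAt hx.1.ne').hasDerivWithinAt)
  intro x hx
  rw [← NNReal.coe_le_coe, coe_nnnorm]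

  have habs : ‖Complex.exp (Complex.I * x)‖ = 1 := by
    rw [mul_comm]
    exact Complex.norm_exp_ofReal_mul_I x
  calc ‖((eps1' x : ℝ) : ℂ) * Complex.exp (Complex.I * x) +
        ((1 + eps1 x : ℝ) : ℂ) * (Complex.exp (Complex.I * x) * Complex.I)‖
      ≤ ‖((eps1' x : ℝ) : ℂ) * Complex.exp (Complex.I * x)‖ +
        ‖((1 + eps1 x : ℝ) : ℂ) * (Complex.exp (Complex.I * x) * Complex.I)‖ := norm_add_le _ _
    _ ≤ 2600 + 2 := by
        apply add_le_add
        · rw [norm_mul, Complex.norm_real, habs, mul_one,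
            Real.norm_eq_abs]
          exact eps1'_bound hx.1 hx.2.le
        · rw [norm_mul, norm_mul, Complex.norm_real, habs,
            Complex.norm_I, one_mul, mul_one, Real.norm_eq_abs]
          have := eps1_abs_le_one x
          calc |1 + eps1 x| ≤ |(1:ℝ)| + |eps1 x| := abs_add_le _ _
            _ ≤ 1 + 1 := by rw [abs_one]; linarith [this]
            _ = 2 := by norm_num
    _ = 2602 := by norm_num

lemma eps1_node {r : ℝ} (hr : 1 < r) :
    0 < (Real.log r + 1 / π)⁻¹ ∧
    eps1 (Real.log r + 1 / π)⁻¹ =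
      Real.exp (-1 / ((Real.log r + 1 / π)⁻¹) ^ 2) * Real.sin (π * r) := by
  have hπ0 := Real.pi_pos
  have hlog : 0 < Real.log r := Real.log_pos hr
  have hd0 : 0 < Real.log r + 1 / π := by positivity
  have hp : 0 < (Real.log r + 1 / π)⁻¹ := by positivity
  refine ⟨hp, ?_⟩
  rw [eps1, if_neg hp.ne']
  congr 2
  rw [one_div ((Real.log r + 1 / π)⁻¹), inv_inv]
  rw [add_sub_cancel_right, Real.exp_log (by linarith)]

lemma sin_pi_mul_nat (k : ℕ) : Real.sin (π * k) = 0 := by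
  rw [mul_comm]; exact Real.sin_nat_mul_pi k

lemma sin_pi_mul_half (m : ℕ) : Real.sin (π * (2 * m + 3 / 2)) = -1 := by
  have h : π * (2 * (m:ℝ) + 3 / 2) = π + π / 2 + m * (2 * π) := by ring
  rw [h, Real.sin_add_nat_mul_two_pi, Real.sin_add, Real.sin_pi, Real.cos_pi,
    Real.sin_pi_div_two]
  ring

lemma log_add_le {a c : ℝ} (ha : 0 < a) (hc : 0 ≤ c) :
    Real.log (Real.exp a + c) ≤ a + c * Real.exp (-a) := by
  have h1 : Real.exp a + c = Real.exp a * (1 + c * Real.exp (-a)) := by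
    rw [Real.exp_neg]
    field_simp
  rw [h1, Real.log_mul (Real.exp_pos a).ne' (by positivity), Real.log_exp]
  have h2 : Real.log (1 + c * Real.exp (-a)) ≤ (1 + c * Real.exp (-a)) - 1 :=
    Real.log_le_sub_one_of_pos (by positivity)
  linarith

lemma exists_cross {u : ℝ} (hu : 200 ≤ u) :
    ∃ k : ℕ, 2 ≤ k ∧ u - 1 / π ≤ Real.log k ∧
      Real.log k ≤ u - 1 / π + 6 * Real.exp (-u) := by
  have hπ0 := Real.pi_pos
  have hπ1 : 1 / π ≤ 1 := by
    rw [div_le_one hπ0]; linarith [Real.pi_gt_three]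
  set a : ℝ := u - 1 / π with hadef
  have ha : 199 ≤ a := by simp only [hadef]; linarith
  have hea : (2:ℝ) ≤ Real.exp a := by
    calc (2:ℝ) ≤ Real.exp 1 := by linarith [Real.add_one_le_exp 1]
      _ ≤ Real.exp a := Real.exp_le_exp.2 (by linarith)
  refine ⟨⌈Real.exp a⌉₊, ?_, ?_, ?_⟩
  · have h : (2:ℝ) ≤ (⌈Real.exp a⌉₊ : ℝ) := hea.trans (Nat.le_ceil _)
    exact_mod_cast h
  · calc a = Real.log (Real.exp a) := (Real.log_exp a).symm
      _ ≤ Real.log ⌈Real.exp a⌉₊ :=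
        Real.log_le_log (Real.exp_pos a) (Nat.le_ceil _)
  · have hceil : (⌈Real.exp a⌉₊ : ℝ) ≤ Real.exp a + 1 :=
      (Nat.ceil_lt_add_one (Real.exp_pos a).le).le
    calc Real.log ⌈Real.exp a⌉₊ ≤ Real.log (Real.exp a + 1) :=
        Real.log_le_log (by positivity) hceil
      _ ≤ a + 1 * Real.exp (-a) := log_add_le (by linarith) (by norm_num)
      _ ≤ a + 6 * Real.exp (-u) := by
          have : Real.exp (-a) = Real.exp (1 / π) * Real.exp (-u) := by
            rw [← Real.exp_add]; congr 1; simp [hadef]; ring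
          rw [this]
          have h3 : Real.exp (1 / π) ≤ 3 := by
            calc Real.exp (1 / π) ≤ Real.exp 1 := Real.exp_le_exp.2 hπ1
              _ ≤ 3 := by linarith [Real.exp_one_lt_d9]
          nlinarith [Real.exp_pos (-u), h3, Real.exp_pos (1 / π)]

lemma exists_half {u : ℝ} (hu : 200 ≤ u) :
    ∃ m : ℕ, u - 1 / π ≤ Real.log (2 * m + 3 / 2) ∧
      Real.log (2 * m + 3 / 2) ≤ u - 1 / π + 6 * Real.exp (-u) := by
  have hπ0 := Real.pi_pos
  have hπ1 : 1 / π ≤ 1 := by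
    rw [div_le_one hπ0]; linarith [Real.pi_gt_three]
  set a : ℝ := u - 1 / π with hadef
  have ha : 199 ≤ a := by simp only [hadef]; linarith
  have hea : (2:ℝ) ≤ Real.exp a := by
    calc (2:ℝ) ≤ Real.exp 1 := by linarith [Real.add_one_le_exp 1]
      _ ≤ Real.exp a := Real.exp_le_exp.2 (by linarith)
  refine ⟨⌈(Real.exp a - 3 / 2) / 2⌉₊, ?_, ?_⟩
  · have h1 : (Real.exp a - 3 / 2) / 2 ≤ ⌈(Real.exp a - 3 / 2) / 2⌉₊ := Nat.le_ceil _
    have h2 : Real.exp a ≤ 2 * ⌈(Real.exp a - 3 / 2) / 2⌉₊ + 3 / 2 := by linarith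
    calc a = Real.log (Real.exp a) := (Real.log_exp a).symm
      _ ≤ Real.log (2 * ⌈(Real.exp a - 3 / 2) / 2⌉₊ + 3 / 2) :=
        Real.log_le_log (Real.exp_pos a) h2
  · have h1 : (⌈(Real.exp a - 3 / 2) / 2⌉₊ : ℝ) ≤ (Real.exp a - 3 / 2) / 2 + 1 :=
      (Nat.ceil_lt_add_one (by linarith)).le
    have h2 : 2 * (⌈(Real.exp a - 3 / 2) / 2⌉₊ : ℝ) + 3 / 2 ≤ Real.exp a + 2 := by linarith
    calc Real.log (2 * ⌈(Real.exp a - 3 / 2) / 2⌉₊ + 3 / 2)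
        ≤ Real.log (Real.exp a + 2) := Real.log_le_log (by positivity) h2
      _ ≤ a + 2 * Real.exp (-a) := log_add_le (by linarith) (by norm_num)
      _ ≤ a + 6 * Real.exp (-u) := by
          have : Real.exp (-a) = Real.exp (1 / π) * Real.exp (-u) := by
            rw [← Real.exp_add]; congr 1; simp [hadef]; ring
          rw [this]
          have h3 : Real.exp (1 / π) ≤ 3 := by
            calc Real.exp (1 / π) ≤ Real.exp 1 := Real.exp_le_exp.2 hπ1
              _ ≤ 3 := by linarith [Real.exp_one_lt_d9]
          nlinarith [Real.exp_pos (-u), h3, Real.exp_pos (1 / π)]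

lemma pertCurve_eq_gmid {t : ℝ} (h0 : 0 < t) (hπ : t < π) : pertCurve eps1 t = gmid t := by
  simp [pertCurve, gmid, not_le.2 h0, hπ]

lemma abs_gmid (t : ℝ) : ‖gmid t‖ = |1 + eps1 t| := by
  rw [gmid, norm_mul, Complex.norm_real, Real.norm_eq_abs, mul_comm Complex.I, Complex.norm_exp_ofReal_mul_I,
    mul_one]

lemma mem_pertSet {t : ℝ} (ht : -1 ≤ t) : pertCurve eps1 t ∈ pertSet eps1 :=
  ⟨t, ht, rfl⟩

set_option maxHeartbeats 1000000 in
lemma layer_contains {ε t : ℝ} (hε : 0 < ε) (hε' : ε < Real.exp (-200))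
    (ht : 0 < t) (htu : t ≤ 1 / (-Real.log ε)) :
    pertCurve eps1 t ∈ relLayer (pertSet eps1) (ball (0 : ℂ) 1) ε := by
  have hπ0 := Real.pi_pos
  have hlog : 200 ≤ -Real.log ε := by
    have h := Real.log_lt_log hε hε'
    rw [Real.log_exp] at h
    linarith
  set u : ℝ := 1 / t with hudef
  have hu0 : 0 < u := by positivity
  have hut : t = 1 / u := by rw [hudef]; field_simp
  have huL : -Real.log ε ≤ u := by
    have h1 : 1 / (1 / (-Real.log ε)) ≤ 1 / t := one_div_le_one_div_of_le ht htu
    rw [one_div_one_div] at h1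
    rw [hudef]; exact h1
  have hu200 : 200 ≤ u := le_trans hlog huL
  have hexpu : Real.exp (-u) ≤ ε := by
    calc Real.exp (-u) ≤ Real.exp (Real.log ε) := Real.exp_le_exp.2 (by linarith)
      _ = ε := Real.exp_log hε
  -- pick the two node parameters
  obtain ⟨k, hk2, hk1, hk3⟩ := exists_cross hu200
  obtain ⟨m, hm1, hm3⟩ := exists_half hu200
  have hkr : (1:ℝ) < (k:ℝ) := by exact_mod_cast Nat.lt_of_lt_of_le one_lt_two hk2
  have hmr : (1:ℝ) < 2 * (m:ℝ) + 3 / 2 := by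
    have := Nat.cast_nonneg (α := ℝ) m
    linarith
  -- generic estimate for a node parameter
  have tmem : t ∈ Set.Ioo (0:ℝ) π := by
    constructor
    · exact ht
    · rw [hut]
      calc 1 / u ≤ 1 / 200 := by
            apply one_div_le_one_div_of_le <;> linarith
        _ < π := by linarith [Real.pi_gt_three]
  have key : ∀ r : ℝ, 1 < r → u - 1 / π ≤ Real.log r →
      Real.log r ≤ u - 1 / π + 6 * Real.exp (-u) →
      0 < (Real.log r + 1 / π)⁻¹ ∧ (Real.log r + 1 / π)⁻¹ ∈ Set.Ioo (0:ℝ) π ∧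
        dist (pertCurve eps1 t) (pertCurve eps1 ((Real.log r + 1 / π)⁻¹)) ≤ ε := by
    intro r hr h1 h2
    set w : ℝ := Real.log r + 1 / π with hwdef
    have hw1 : u ≤ w := by rw [hwdef]; linarith
    have hw2 : w ≤ u + 6 * Real.exp (-u) := by rw [hwdef]; linarith
    have hw0 : 0 < w := by linarith
    have hp0 : 0 < w⁻¹ := by positivity
    have hpt : w⁻¹ ≤ t := by
      rw [hut, one_div]
      exact inv_anti₀ hu0 hw1
    have hpm : w⁻¹ ∈ Set.Ioo (0:ℝ) π := ⟨hp0, lt_of_le_of_lt hpt tmem.2⟩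
    refine ⟨hp0, hpm, ?_⟩
    have hdiff : t - w⁻¹ ≤ 6 * Real.exp (-u) / u ^ 2 := by
      rw [hut, one_div]
      have e1 : u⁻¹ - w⁻¹ = (w - u) / (u * w) := by field_simp
      rw [e1]
      have hnum : w - u ≤ 6 * Real.exp (-u) := by linarith
      have hden : u ^ 2 ≤ u * w := by nlinarith
      gcongr
    have hdist2 : dist t w⁻¹ ≤ 6 * Real.exp (-u) / u ^ 2 := by
      rw [Real.dist_eq, abs_of_nonneg (by linarith)]
      exact hdiff
    have hsmall : (2602:ℝ) * (6 * Real.exp (-u) / u ^ 2) ≤ ε := by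
      have hu2 : (40000:ℝ) ≤ u ^ 2 := by nlinarith [hu200]
      have h3 : 6 * Real.exp (-u) / u ^ 2 ≤ 6 * ε / 40000 := by
        gcongr
      nlinarith [h3, hε]
    calc dist (pertCurve eps1 t) (pertCurve eps1 w⁻¹)
        = dist (gmid t) (gmid w⁻¹) := by
          rw [pertCurve_eq_gmid tmem.1 tmem.2, pertCurve_eq_gmid hpm.1 hpm.2]
      _ ≤ (2602:ℝ≥0) * dist t w⁻¹ := gmid_lipschitz.dist_le_mul t tmem w⁻¹ hpm
      _ ≤ (2602:ℝ) * (6 * Real.exp (-u) / u ^ 2) := by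
          push_cast
          apply mul_le_mul_of_nonneg_left hdist2 (by norm_num)
      _ ≤ ε := hsmall
  -- the crossing point lies on the unit circle
  obtain ⟨hp0, hpm, hpd⟩ := key (k:ℝ) hkr hk1 hk3
  obtain ⟨hq0, hqm, hqd⟩ := key (2 * (m:ℝ) + 3 / 2) hmr hm1 hm3
  set p : ℝ := (Real.log (k:ℝ) + 1 / π)⁻¹ with hpdef
  set q : ℝ := (Real.log (2 * (m:ℝ) + 3 / 2) + 1 / π)⁻¹ with hqdef
  have hpe : eps1 p = 0 := by
    obtain ⟨_, h⟩ := eps1_node hkr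
    rw [hpdef, h, sin_pi_mul_nat, mul_zero]
  have hqe : eps1 q = -Real.exp (-1 / q ^ 2) := by
    obtain ⟨_, h⟩ := eps1_node hmr
    rw [hqdef, h, sin_pi_mul_half]
    ring
  have hpabs : ‖pertCurve eps1 p‖ = 1 := by
    rw [pertCurve_eq_gmid hpm.1 hpm.2, abs_gmid, hpe]
    norm_num
  have hqabs : ‖pertCurve eps1 q‖ < 1 := by
    rw [pertCurve_eq_gmid hqm.1 hqm.2, abs_gmid, hqe]
    have h1 : Real.exp (-1 / q ^ 2) < 1 := by
      rw [Real.exp_lt_one_iff]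
      have : 0 < q ^ 2 := by positivity
      rw [div_neg_iff]
      right
      constructor <;> linarith
    have h2 : 0 < Real.exp (-1 / q ^ 2) := Real.exp_pos _
    rw [abs_of_pos (by linarith)]
    linarith
  -- memberships
  have hSt : pertCurve eps1 t ∈ pertSet eps1 := mem_pertSet (by linarith)
  have hSp : pertCurve eps1 p ∈ pertSet eps1 := mem_pertSet (by linarith [hpm.1])
  have hSq : pertCurve eps1 q ∈ pertSet eps1 := mem_pertSet (by linarith [hqm.1])
  have hpnb : pertCurve eps1 p ∉ ball (0:ℂ) 1 := by
    rw [mem_ball_zero_iff, hpabs]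
    exact lt_irrefl 1
  have hqb : pertCurve eps1 q ∈ ball (0:ℂ) 1 := by
    rw [mem_ball_zero_iff]
    exact hqabs
  by_cases hb : pertCurve eps1 t ∈ ball (0:ℂ) 1
  · exact Or.inl ⟨⟨hSt, hb⟩,
      le_trans (infDist_le_dist_of_mem ⟨hSp, hpnb⟩) hpd⟩
  · exact Or.inr ⟨⟨hSt, hb⟩,
      le_trans (infDist_le_dist_of_mem ⟨hSq, hqb⟩) hqd⟩

lemma eps1_continuousOn : ContinuousOn eps1 {s : ℝ | s ≠ 0} := by
  have hbase : ContinuousOn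
      (fun s : ℝ => Real.exp (-1 / s ^ 2) * Real.sin (π * Real.exp (1 / s - 1 / π)))
      {s : ℝ | s ≠ 0} := by
    apply ContinuousOn.mul
    · apply Real.continuous_exp.comp_continuousOn
      exact continuousOn_const.div (continuous_pow 2).continuousOn
        (fun x hx => pow_ne_zero 2 hx)
    · apply Real.continuous_sin.comp_continuousOn
      apply continuousOn_const.mul
      apply Real.continuous_exp.comp_continuousOn
      exact (continuousOn_const.div continuous_id.continuousOn fun x hx => hx).sub
        continuousOn_const
  exact hbase.congr fun s hs => by rw [eps1, if_neg hs]

lemma gmid_continuousOn : ContinuousOn gmid {s : ℝ | s ≠ 0} := by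
  apply ContinuousOn.mul
  · exact Complex.continuous_ofReal.comp_continuousOn
      (continuousOn_const.add eps1_continuousOn)
  · exact (Complex.continuous_exp.comp
      (continuous_const.mul Complex.continuous_ofReal)).continuousOn

lemma exp_neg_inv_sq_le {T : ℝ} (h0 : 0 < T) (h : T ≤ 1 / 200) :
    Real.exp (-1 / T ^ 2) ≤ T / 100 := by
  set v : ℝ := 1 / T with hvdef
  have hv0 : 0 < v := by positivity
  have hv200 : 200 ≤ v := by
    rw [hvdef]
    calc (200:ℝ) = 1 / (1 / 200) := by norm_num
      _ ≤ 1 / T := one_div_le_one_div_of_le h0 h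
  have he : -1 / T ^ 2 = -(v ^ 2) := by rw [hvdef]; field_simp
  have h4 : (v ^ 2) ^ 2 ≤ 4 * Real.exp (v ^ 2) := sq_le_exp (by positivity)
  have hge : 100 * v ≤ Real.exp (v ^ 2) := by
    have h1 : 200 * v ≤ v ^ 2 := by nlinarith [hv200, hv0]
    have h3 : 400 * v ≤ (v ^ 2) ^ 2 := by nlinarith [h1, hv0, hv200, sq_nonneg (v ^ 2 - 200 * v)]
    linarith [h4, h3]
  have hinv : (Real.exp (v ^ 2))⁻¹ ≤ (100 * v)⁻¹ :=
    inv_anti₀ (by positivity) hge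
  have hTv : (100 * v)⁻¹ = T / 100 := by
    rw [hvdef]
    field_simp
  calc Real.exp (-1 / T ^ 2) = (Real.exp (v ^ 2))⁻¹ := by rw [he, Real.exp_neg]
    _ ≤ (100 * v)⁻¹ := hinv
    _ = T / 100 := hTv

lemma gmid_im (s : ℝ) : (gmid s).im = (1 + eps1 s) * Real.sin s := by
  rw [gmid, mul_comm Complex.I]
  simp [Complex.mul_im, Complex.exp_ofReal_mul_I_im]

set_option maxHeartbeats 1000000 in
lemma layer_measure {ε : ℝ} (hε : 0 < ε) (hε' : ε < Real.exp (-200)) :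
    ENNReal.ofReal ((1 / (2 * π)) / (-Real.log ε)) ≤
      μH[1] (relLayer (pertSet eps1) (ball (0 : ℂ) 1) ε) := by
  have hπ0 := Real.pi_pos
  have hlog : 200 ≤ -Real.log ε := by
    have h := Real.log_lt_log hε hε'
    rw [Real.log_exp] at h
    linarith
  set T : ℝ := 1 / (-Real.log ε) with hTdef
  have hT0 : 0 < T := by rw [hTdef]; positivity
  have hT : T ≤ 1 / 200 := by
    rw [hTdef]
    apply one_div_le_one_div_of_le <;> linarith
  have hTπ : T < π := by linarith [Real.pi_gt_three]
  -- the image arc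
  set A : Set ℂ := pertCurve eps1 '' Set.Ioc 0 T with hAdef
  have hsub : Set.Ioc (0:ℝ) T ⊆ {s : ℝ | s ≠ 0} := fun s hs => ne_of_gt hs.1
  have hcont : ContinuousOn (pertCurve eps1) (Set.Ioc 0 T) := by
    apply (gmid_continuousOn.mono hsub).congr
    intro s hs
    exact pertCurve_eq_gmid hs.1 (lt_of_le_of_lt hs.2 hTπ)
  have hconn : IsPreconnected A := (isPreconnected_Ioc).image _ hcont
  have hx1 : pertCurve eps1 (T / 2) ∈ A :=
    Set.mem_image_of_mem _ ⟨by linarith, by linarith⟩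
  have hx2 : pertCurve eps1 T ∈ A := Set.mem_image_of_mem _ ⟨hT0, le_refl T⟩
  set D : ℝ := dist (pertCurve eps1 T) (pertCurve eps1 (T / 2)) with hDdef
  -- the layer contains A
  have hA_layer : A ⊆ relLayer (pertSet eps1) (ball (0 : ℂ) 1) ε := by
    rintro z ⟨s, hs, rfl⟩
    exact layer_contains hε hε' hs.1 hs.2
  -- lower bound for D
  have hDlb : T / (2 * π) ≤ D := by
    have he1 : |eps1 T| ≤ T / 100 := by
      refine (eps1_abs_le hT0.ne').trans (exp_neg_inv_sq_le hT0 hT)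
    have he2 : |eps1 (T / 2)| ≤ T / 100 := by
      refine (eps1_abs_le (by positivity)).trans ?_
      calc Real.exp (-1 / (T / 2) ^ 2) ≤ (T / 2) / 100 :=
            exp_neg_inv_sq_le (by positivity) (by linarith)
        _ ≤ T / 100 := by linarith
    have hsinT : T - T ^ 3 / 4 < Real.sin T := by
      have := Real.sin_gt_sub_cube hT0
      nlinarith [pow_pos hT0 3]
    have hsinT2 : Real.sin (T / 2) < T / 2 := Real.sin_lt (by linarith)
    have hsinT2' : 0 ≤ Real.sin (T / 2) := by
      apply Real.sin_nonneg_of_nonneg_of_le_pi <;> [linarith; linarith]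
    have hsinT' : Real.sin T ≤ 1 := Real.sin_le_one T
    have him : T / 4 ≤ (pertCurve eps1 T).im - (pertCurve eps1 (T / 2)).im := by
      rw [pertCurve_eq_gmid hT0 hTπ, pertCurve_eq_gmid (by linarith) (by linarith),
        gmid_im, gmid_im]
      have hT3 : T ^ 3 / 4 ≤ T / 100 := by
        have hsq : T ^ 2 ≤ 1 / 40000 := by nlinarith [hT0, hT]
        nlinarith [hsq, hT0]
      have hb1 : eps1 T * Real.sin T ≥ -(T / 100) := by
        nlinarith [abs_le.1 he1, Real.neg_one_le_sin T, hsinT']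
      have hb2 : eps1 (T / 2) * Real.sin (T / 2) ≤ T / 100 := by
        nlinarith [abs_le.1 he2, hsinT2', hsinT2]
      nlinarith [hb1, hb2]
    calc T / (2 * π) ≤ T / 4 := by
          rw [div_le_div_iff₀ (by positivity) (by norm_num)]
          nlinarith [Real.pi_gt_three]
      _ ≤ (pertCurve eps1 T).im - (pertCurve eps1 (T / 2)).im := him
      _ ≤ |((pertCurve eps1 T) - (pertCurve eps1 (T / 2))).im| := by
          rw [Complex.sub_im]
          exact le_abs_self _
      _ ≤ ‖(pertCurve eps1 T) - (pertCurve eps1 (T / 2))‖ :=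
          Complex.abs_im_le_norm _
      _ = D := by rw [hDdef, Complex.dist_eq]
  -- measure estimate via the 1-Lipschitz distance map
  have hmeas : ENNReal.ofReal D ≤ μH[1] A := by
    set f : ℂ → ℝ := fun z => dist z (pertCurve eps1 (T / 2)) with hfdef
    have hlip : LipschitzWith 1 f := LipschitzWith.dist_left _
    have hfA : IsPreconnected (f '' A) :=
      hconn.image f (hlip.continuous.continuousOn)
    have h0 : (0:ℝ) ∈ f '' A := ⟨_, hx1, by simp [hfdef]⟩
    have hD : D ∈ f '' A := ⟨_, hx2, rfl⟩
    have hIcc : Set.Icc (0:ℝ) D ⊆ f '' A := hfA.Icc_subset h0 hD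
    calc ENNReal.ofReal D = μH[1] (Set.Icc (0:ℝ) D) := by
          rw [MeasureTheory.hausdorffMeasure_real, Real.volume_Icc, sub_zero]
      _ ≤ μH[1] (f '' A) := measure_mono hIcc
      _ ≤ (1:ℝ≥0) ^ (1:ℝ) * μH[1] A := hlip.hausdorffMeasure_image_le (by norm_num) A
      _ = μH[1] A := by simp
  calc ENNReal.ofReal ((1 / (2 * π)) / (-Real.log ε))
      = ENNReal.ofReal (T / (2 * π)) := by
        congr 1
        rw [hTdef]
        field_simp
    _ ≤ ENNReal.ofReal D := ENNReal.ofReal_le_ofReal hDlb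
    _ ≤ μH[1] A := hmeas
    _ ≤ μH[1] (relLayer (pertSet eps1) (ball (0 : ℂ) 1) ε) :=
        measure_mono hA_layer

lemma lip_seg1 : LipschitzWith 1 (fun t : ℝ => ((t + 1 : ℝ) : ℂ)) := by
  apply LipschitzWith.of_dist_le_mul
  intro x y
  have : dist ((x + 1 : ℝ) : ℂ) ((y + 1 : ℝ) : ℂ) = dist (x + 1) (y + 1) :=
    Complex.isometry_ofReal.dist_eq _ _
  rw [this, Real.dist_eq, Real.dist_eq]
  norm_num [add_sub_add_right_eq_sub]

lemma lip_seg2 : LipschitzWith 1 (fun t : ℝ => ((π - t : ℝ) : ℂ)) := by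
  apply LipschitzWith.of_dist_le_mul
  intro x y
  have : dist ((π - x : ℝ) : ℂ) ((π - y : ℝ) : ℂ) = dist (π - x) (π - y) :=
    Complex.isometry_ofReal.dist_eq _ _
  rw [this, Real.dist_eq, Real.dist_eq]
  norm_num [sub_sub_sub_cancel_left, abs_sub_comm]

lemma ball_inter_subset :
    pertSet eps1 ∩ ball (0 : ℂ) 1 ⊆
      (fun t : ℝ => ((t + 1 : ℝ) : ℂ)) '' Set.Icc (-1) 0 ∪
      gmid '' Set.Ioo 0 π ∪
      (fun t : ℝ => ((π - t : ℝ) : ℂ)) '' Set.Icc π (π + 1) := by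
  rintro z ⟨⟨t, ht, rfl⟩, hb⟩
  rcases le_or_gt t 0 with h0 | h0
  · left; left
    exact ⟨t, ⟨ht, h0⟩, by rw [pertCurve, if_pos h0]⟩
  · rcases lt_or_ge t π with hπ | hπ
    · left; right
      exact ⟨t, ⟨h0, hπ⟩, (pertCurve_eq_gmid h0 hπ).symm⟩
    · right
      have hval : pertCurve eps1 t = ((π - t : ℝ) : ℂ) := by
        rw [pertCurve, if_neg (by linarith [Real.pi_pos]), if_neg (not_lt.2 hπ)]
      refine ⟨t, ⟨hπ, ?_⟩, hval.symm⟩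
      have := mem_ball_zero_iff.1 (hval ▸ hb)
      rw [Complex.norm_real, Real.norm_eq_abs, abs_lt] at this
      linarith [this.1]

lemma measure_ball_inter_lt :
    μH[1] (pertSet eps1 ∩ ball (0 : ℂ) 1) ≤ ENNReal.ofReal 10000 := by
  have h1 : μH[1] ((fun t : ℝ => ((t + 1 : ℝ) : ℂ)) '' Set.Icc (-1 : ℝ) 0) ≤
      ENNReal.ofReal 1 := by
    calc μH[1] ((fun t : ℝ => ((t + 1 : ℝ) : ℂ)) '' Set.Icc (-1 : ℝ) 0)
        ≤ (1 : ℝ≥0) ^ (1:ℝ) * μH[1] (Set.Icc (-1 : ℝ) 0) :=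
          lip_seg1.hausdorffMeasure_image_le (by norm_num) _
      _ = ENNReal.ofReal 1 := by
          rw [MeasureTheory.hausdorffMeasure_real, Real.volume_Icc]
          norm_num
  have h2 : μH[1] (gmid '' Set.Ioo (0:ℝ) π) ≤ ENNReal.ofReal 2602 * ENNReal.ofReal π := by
    calc μH[1] (gmid '' Set.Ioo (0:ℝ) π)
        ≤ (2602 : ℝ≥0) ^ (1:ℝ) * μH[1] (Set.Ioo (0:ℝ) π) :=
          gmid_lipschitz.hausdorffMeasure_image_le (by norm_num)
      _ = ENNReal.ofReal 2602 * ENNReal.ofReal π := by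
          rw [MeasureTheory.hausdorffMeasure_real, Real.volume_Ioo, sub_zero, ENNReal.rpow_one,
            ← ENNReal.ofReal_coe_nnreal]
          norm_num
  have h3 : μH[1] ((fun t : ℝ => ((π - t : ℝ) : ℂ)) '' Set.Icc π (π + 1)) ≤
      ENNReal.ofReal 1 := by
    calc μH[1] ((fun t : ℝ => ((π - t : ℝ) : ℂ)) '' Set.Icc π (π + 1))
        ≤ (1 : ℝ≥0) ^ (1:ℝ) * μH[1] (Set.Icc π (π + 1)) :=
          lip_seg2.hausdorffMeasure_image_le (by norm_num) _
      _ = ENNReal.ofReal 1 := by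
          rw [MeasureTheory.hausdorffMeasure_real, Real.volume_Icc]
          simp
  calc μH[1] (pertSet eps1 ∩ ball (0 : ℂ) 1)
      ≤ μH[1] ((fun t : ℝ => ((t + 1 : ℝ) : ℂ)) '' Set.Icc (-1 : ℝ) 0 ∪
          gmid '' Set.Ioo 0 π ∪
          (fun t : ℝ => ((π - t : ℝ) : ℂ)) '' Set.Icc π (π + 1)) :=
        measure_mono ball_inter_subset
    _ ≤ μH[1] ((fun t : ℝ => ((t + 1 : ℝ) : ℂ)) '' Set.Icc (-1 : ℝ) 0 ∪
          gmid '' Set.Ioo 0 π) +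
        μH[1] ((fun t : ℝ => ((π - t : ℝ) : ℂ)) '' Set.Icc π (π + 1)) := measure_union_le _ _
    _ ≤ (μH[1] ((fun t : ℝ => ((t + 1 : ℝ) : ℂ)) '' Set.Icc (-1 : ℝ) 0) +
          μH[1] (gmid '' Set.Ioo 0 π)) +
        μH[1] ((fun t : ℝ => ((π - t : ℝ) : ℂ)) '' Set.Icc π (π + 1)) := by
          gcongr
          exact measure_union_le _ _
    _ ≤ (ENNReal.ofReal 1 + ENNReal.ofReal 2602 * ENNReal.ofReal π) + ENNReal.ofReal 1 := by
          gcongr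
    _ ≤ ENNReal.ofReal 10000 := by
        rw [← ENNReal.ofReal_mul (by norm_num), ← ENNReal.ofReal_add (by norm_num) (by positivity),
          ← ENNReal.ofReal_add (by positivity) (by norm_num)]
        apply ENNReal.ofReal_le_ofReal
        nlinarith [Real.pi_lt_d6, Real.pi_pos]

/-- the perturbed curve space `X₁ = X_{ε₁}` does not satisfy the layer
decay property (LD): for the unit ball `B⁰` one has `Λ(B⁰_ε) ≥ c/(−ln ε)` for all
sufficiently small `ε > 0`, which is incompatible with any bound `C ε^η`. -/
theorem pertCurve_exp_not_layerDecay :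
    (∃ c : ℝ, 0 < c ∧ ∃ ε₀ : ℝ, 0 < ε₀ ∧ ∀ ε : ℝ, 0 < ε → ε < ε₀ →
      ENNReal.ofReal (c / (-Real.log ε)) ≤
        μH[1] (relLayer (pertSet eps1) (ball (0 : ℂ) 1) ε)) ∧
    ¬ (∃ (η : ℝ) (C : ℝ≥0), 0 < η ∧
        ∀ z ∈ pertSet eps1, ∀ r : ℝ, 0 < r → ∀ ε : ℝ, 0 < ε →
          μH[1] (relLayer (pertSet eps1) (ball z r) ε) ≤
            (C : ℝ≥0∞) * ENNReal.ofReal ((ε / r) ^ η) *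
              μH[1] (pertSet eps1 ∩ ball z r)) := by
  have hπ0 := Real.pi_pos
  constructor
  · exact ⟨1 / (2 * π), by positivity, Real.exp (-200), Real.exp_pos _,
      fun ε hε hε' => layer_measure hε hε'⟩
  · rintro ⟨η, C, hη, hLD⟩
    have hz : (0:ℂ) ∈ pertSet eps1 := by
      refine ⟨-1, Set.mem_Ici.2 (le_refl _), ?_⟩
      rw [pertCurve, if_pos (by norm_num : (-1:ℝ) ≤ 0)]
      norm_num
    obtain ⟨n, hn⟩ := exists_nat_gt (max 201 ((320000 * ((C:ℝ) + 1)) / η ^ 2))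
    have hn201 : (201:ℝ) ≤ n := le_of_lt (lt_of_le_of_lt (le_max_left _ _) hn)
    have hn0 : (0:ℝ) < n := by linarith
    have hnC : (320000 * ((C:ℝ) + 1)) / η ^ 2 < n :=
      lt_of_le_of_lt (le_max_right _ _) hn
    set ε : ℝ := Real.exp (-(n:ℝ)) with hεdef
    have hε0 : 0 < ε := Real.exp_pos _
    have hεlt : ε < Real.exp (-200) := Real.exp_lt_exp.2 (by linarith)
    have hA := layer_measure hε0 hεlt
    have hB := hLD 0 hz 1 one_pos ε hε0
    have hμ := measure_ball_inter_lt
    have hlogε : -Real.log ε = (n:ℝ) := by rw [hεdef, Real.log_exp]; ring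
    have hRHS : (C : ℝ≥0∞) * ENNReal.ofReal ((ε / 1) ^ η) *
        μH[1] (pertSet eps1 ∩ ball (0:ℂ) 1) ≤
        ENNReal.ofReal ((C:ℝ) * (ε ^ η * 10000)) := by
      rw [div_one]
      calc (C : ℝ≥0∞) * ENNReal.ofReal (ε ^ η) * μH[1] (pertSet eps1 ∩ ball (0:ℂ) 1)
          ≤ (C : ℝ≥0∞) * ENNReal.ofReal (ε ^ η) * ENNReal.ofReal 10000 := by gcongr
        _ = ENNReal.ofReal ((C:ℝ) * (ε ^ η * 10000)) := by
            rw [← ENNReal.ofReal_coe_nnreal, ← ENNReal.ofReal_mul (NNReal.coe_nonneg C),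
              ← ENNReal.ofReal_mul (by positivity)]
            congr 1
            ring
    have hmain : ENNReal.ofReal ((1 / (2 * π)) / (n:ℝ)) ≤
        ENNReal.ofReal ((C:ℝ) * (ε ^ η * 10000)) := by
      calc ENNReal.ofReal ((1 / (2 * π)) / (n:ℝ))
          = ENNReal.ofReal ((1 / (2 * π)) / (-Real.log ε)) := by rw [hlogε]
        _ ≤ μH[1] (relLayer (pertSet eps1) (ball (0 : ℂ) 1) ε) := hA
        _ ≤ (C : ℝ≥0∞) * ENNReal.ofReal ((ε / 1) ^ η) *
              μH[1] (pertSet eps1 ∩ ball (0:ℂ) 1) := hB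
        _ ≤ ENNReal.ofReal ((C:ℝ) * (ε ^ η * 10000)) := hRHS
    rw [ENNReal.ofReal_le_ofReal_iff (by positivity)] at hmain
    -- derive a contradiction
    have hεη : ε ^ η = Real.exp (-((n:ℝ) * η)) := by
      rw [hεdef, ← Real.exp_mul]
      congr 1
      ring
    have hy0 : 0 < (n:ℝ) * η := mul_pos hn0 hη
    have hE2 : Real.exp (-((n:ℝ) * η)) * ((n:ℝ) * η) ^ 2 ≤ 4 := by
      have h1 : ((n:ℝ) * η) ^ 2 ≤ 4 * Real.exp ((n:ℝ) * η) := sq_le_exp hy0.le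
      have h2 : Real.exp (-((n:ℝ) * η)) * Real.exp ((n:ℝ) * η) = 1 := by
        rw [← Real.exp_add]; simp
      nlinarith [h1, h2, (Real.exp_pos (-((n:ℝ) * η))).le]
    have hny : 320000 * ((C:ℝ) + 1) < (n:ℝ) * η ^ 2 := by
      rw [div_lt_iff₀ (by positivity)] at hnC
      nlinarith [hnC]
    have hπ4 : π < 4 := by linarith [Real.pi_lt_d6]
    have hgoal : (C:ℝ) * (ε ^ η * 10000) < (1 / (2 * π)) / (n:ℝ) := by
      rw [hεη]
      have he : (1 / (2 * π)) / (n:ℝ) = 1 / (2 * π * n) := by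
        field_simp
      rw [he, lt_div_iff₀ (by positivity)]
      have hE := (Real.exp_pos (-((n:ℝ) * η))).le
      have hC0 := NNReal.coe_nonneg C
      have hx : 0 < (n:ℝ) * η ^ 2 := by positivity
      have key : ((C:ℝ) * (Real.exp (-((n:ℝ) * η)) * 10000) * (2 * π * n)) * ((n:ℝ) * η ^ 2)
          ≤ 80000 * π * (C:ℝ) := by
        calc ((C:ℝ) * (Real.exp (-((n:ℝ) * η)) * 10000) * (2 * π * n)) * ((n:ℝ) * η ^ 2)
            = 20000 * π * (C:ℝ) * (Real.exp (-((n:ℝ) * η)) * ((n:ℝ) * η) ^ 2) := by ring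
          _ ≤ 20000 * π * (C:ℝ) * 4 := by
              apply mul_le_mul_of_nonneg_left hE2 (by positivity)
          _ = 80000 * π * (C:ℝ) := by ring
      have h3 : ((C:ℝ) * (Real.exp (-((n:ℝ) * η)) * 10000) * (2 * π * n)) * ((n:ℝ) * η ^ 2)
          < 1 * ((n:ℝ) * η ^ 2) := by
        rw [one_mul]
        calc ((C:ℝ) * (Real.exp (-((n:ℝ) * η)) * 10000) * (2 * π * n)) * ((n:ℝ) * η ^ 2)
            ≤ 80000 * π * (C:ℝ) := key
          _ < 320000 * ((C:ℝ) + 1) := by nlinarith [hπ4, hC0, hπ0]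
          _ < (n:ℝ) * η ^ 2 := hny
      exact lt_of_mul_lt_mul_right h3 hx.le
    linarith [hmain, hgoal]
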